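/- arXiv:math/0405159 — 3 statements merged into one kernel-verified Lean document; each statement's English description precedes it below -/
import Mathlib

section
/- Let G₃ = G₁ *_{G₀} G₂ be an amalgamated free product. For subgroups A ≤ G₁ and B ≤ G₂ with A ∩ G₀ = B ∩ G₀ = C, let H = ⟨A ∪ B⟩ ≤ G₃. Then H ∩ G₁ = A and H ∩ G₂ = B. -/
/-!
Consider Mathlib's amalgam `PushoutI φ` of a family `G i` over `K`, with subgroups `A i` such that
`A i ∩ φ i (K) = φ i (C)`. Every element of the subgroup generated by the `A i` has the form
`base c * w` with `c ∈ C` and `w` a reduced word whose letters lie in the `A i`: this set contains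
`1` and is stable under left multiplication by each `A i`, because when the new letter merges with
the first letter of `w` the product either stays outside `φ i (K)` or falls into `φ i (C)`. By the
normal form theorem a reduced word representing an element of `G i` has at most one letter, from
`G i`, so such an element of the subgroup lies in `A i`. The universal property identifies the
given `G₃` with the amalgam over the index set `Bool`.
-/

open Monoid CoprodI

namespace Monoid.PushoutI

variable {ι : Type*} {G : ι → Type*} [∀ i, Group (G i)] {K : Type*} [Group K]
  {φ : ∀ i, K →* G i} {A : ∀ i, Subgroup (G i)} {C : Subgroup K}

variable (φ) in
def IsReducedIn (A : ∀ i, Subgroup (G i)) (w : Word G) : Prop :=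
  ∀ l ∈ w.toList, l.2 ∈ A l.1 ∧ l.2 ∉ (φ l.1).range

theorem isReducedIn_empty : IsReducedIn φ A .empty := by
  simp [IsReducedIn, Word.empty]

theorem isReducedIn_cons_iff {i : ι} {m : G i} {w : Word G} (h1 : w.fstIdx ≠ some i)
    (h2 : m ≠ 1) :
    IsReducedIn φ A (.cons m w h1 h2) ↔ (m ∈ A i ∧ m ∉ (φ i).range) ∧ IsReducedIn φ A w :=
  List.forall_mem_cons

namespace IsReducedIn

theorem reduced {w : Word G} (hw : IsReducedIn φ A w) : Reduced φ w :=
  fun l hl => (hw l hl).2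

theorem exists_prod_eq_of_mul {w : Word G} (hw : IsReducedIn φ A w) (i : ι) :
    ∃ a ∈ A i, ∃ w' : Word G, w'.fstIdx ≠ some i ∧ IsReducedIn φ A w' ∧
      w.prod = CoprodI.of a * w'.prod := by
  induction w using Word.consRecOn with
  | empty =>
    exact ⟨1, one_mem _, .empty, by simp [Word.fstIdx, Word.empty], isReducedIn_empty, by simp⟩
  | cons j m w h1 h2 _ =>
    rw [isReducedIn_cons_iff] at hw
    by_cases hji : j = i
    · subst hji
      exact ⟨m, hw.1.1, w, h1, hw.2, Word.prod_cons ..⟩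
    · exact ⟨1, one_mem _, _, by simpa using hji, (isReducedIn_cons_iff h1 h2).2 hw, by simp⟩

end IsReducedIn

theorem Reduced.eq_empty_of_prod_eq_of (hφ : ∀ i, Function.Injective (φ i)) {w : Word G}
    (hw : Reduced φ w) {i : ι} (hi : w.fstIdx ≠ some i) {g : G i}
    (h : ofCoprodI w.prod = of (φ := φ) i g) : w = .empty := by
  by_cases hg : g ∈ (φ i).range
  · obtain ⟨c, rfl⟩ := hg
    exact hw.eq_empty_of_mem_range hφ ⟨c, by rw [h, of_apply_eq_base]⟩
  · have hg1 : g⁻¹ ≠ 1 := fun h1 => hg ⟨1, by rw [map_one, ← inv_eq_one.1 h1]⟩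
    have hgw : Reduced φ (.cons g⁻¹ w hi hg1) :=
      List.forall_mem_cons.2 ⟨fun hg' => hg (inv_mem_iff.1 hg'), hw⟩
    have := hgw.eq_empty_of_mem_range hφ ⟨1, by
      rw [map_one, Word.prod_cons, map_mul, ofCoprodI_of, h, ← map_mul, inv_mul_cancel, map_one]⟩
    exact absurd (congrArg Word.toList this) (List.cons_ne_nil _ _)

variable (A C) in
def HasReducedFormIn (x : PushoutI φ) : Prop :=
  ∃ c ∈ C, ∃ w : Word G, IsReducedIn φ A w ∧ x = base φ c * ofCoprodI w.prod

section

variable (hAC : ∀ i k, φ i k ∈ A i ↔ k ∈ C)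
include hAC

theorem hasReducedFormIn_of_mul_prod {i : ι} {a : G i} (ha : a ∈ A i) {w : Word G}
    (hw : IsReducedIn φ A w) (hi : w.fstIdx ≠ some i) :
    HasReducedFormIn A C (of (φ := φ) i a * ofCoprodI w.prod) := by
  by_cases har : a ∈ (φ i).range
  · obtain ⟨c, rfl⟩ := har
    exact ⟨c, (hAC i c).1 ha, w, hw, by rw [of_apply_eq_base]⟩
  · have ha1 : a ≠ 1 := fun h => har ⟨1, by rw [h, map_one]⟩
    refine ⟨1, one_mem C, .cons a w hi ha1, (isReducedIn_cons_iff hi ha1).2 ⟨⟨ha, har⟩, hw⟩, ?_⟩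
    simp [ofCoprodI_of]

theorem HasReducedFormIn.of_mul {x : PushoutI φ} (hx : HasReducedFormIn A C x) {i : ι} {a : G i}
    (ha : a ∈ A i) : HasReducedFormIn A C (of i a * x) := by
  obtain ⟨c, hc, w, hw, rfl⟩ := hx
  obtain ⟨b, hb, w', hi, hw', hprod⟩ := hw.exists_prod_eq_of_mul i
  have : of i a * (base φ c * ofCoprodI w.prod) = of i (a * φ i c * b) * ofCoprodI w'.prod := by
    rw [hprod, map_mul, ofCoprodI_of, map_mul, map_mul, of_apply_eq_base]
    simp only [mul_assoc]
  rw [this]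
  exact hasReducedFormIn_of_mul_prod hAC (mul_mem (mul_mem ha ((hAC i c).2 hc)) hb) hw' hi

theorem hasReducedFormIn_of_mem_iSup {x : PushoutI φ} (hx : x ∈ ⨆ i, (A i).map (of i)) :
    HasReducedFormIn A C x := by
  suffices ∀ y, HasReducedFormIn A C y → HasReducedFormIn A C (x * y) by
    simpa using this 1 ⟨1, one_mem C, .empty, isReducedIn_empty, by simp⟩
  refine Subgroup.iSup_induction _ hx (C := fun x => ∀ y, HasReducedFormIn A C y →
    HasReducedFormIn A C (x * y)) ?_ (by simp) fun x y hx hy z hz => ?_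
  · rintro i _ ⟨a, ha, rfl⟩ y hy
    exact hy.of_mul hAC ha
  · rw [mul_assoc]
    exact hx _ (hy z hz)

theorem HasReducedFormIn.mem_map_of_mem_range (hφ : ∀ i, Function.Injective (φ i))
    {x : PushoutI φ} (hx : HasReducedFormIn A C x) {i : ι} (hxi : x ∈ (of i).range) :
    x ∈ (A i).map (of i) := by
  obtain ⟨c, hc, w, hw, rfl⟩ := hx
  obtain ⟨g, hg⟩ := hxi
  obtain ⟨a, ha, w', hi, hw', hprod⟩ := hw.exists_prod_eq_of_mul i
  have hprod' : ofCoprodI w.prod = of (φ := φ) i a * ofCoprodI w'.prod := by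
    rw [hprod, map_mul, ofCoprodI_of]
  obtain rfl : w' = .empty := hw'.reduced.eq_empty_of_prod_eq_of hφ hi
    (g := a⁻¹ * (φ i c)⁻¹ * g) (by
      rw [map_mul, map_mul, map_inv, map_inv, of_apply_eq_base, hg, hprod']
      group)
  refine ⟨φ i c * a, mul_mem ((hAC i c).2 hc) ha, ?_⟩
  rw [hprod', Word.prod_empty, map_one, mul_one, map_mul, of_apply_eq_base]

theorem iSup_map_of_inf_range_of (hφ : ∀ i, Function.Injective (φ i)) (i : ι) :
    (⨆ j, (A j).map (of j)) ⊓ (of i).range = (A i).map (of (φ := φ) i) :=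
  le_antisymm
    (fun _ ⟨hx, hxi⟩ => (hasReducedFormIn_of_mem_iSup hAC hx).mem_map_of_mem_range hAC hφ hxi)
    (le_inf (le_iSup (fun j => (A j).map (of (φ := φ) j)) i) (Subgroup.map_le_range _ _))

end

theorem iSup_map_inf_range_eq_map_of_injective {G' : Type*} [Group G'] (j : ∀ i, G i →* G')
    {k : G' →* PushoutI φ} (hk : Function.Injective k) (hkj : ∀ i, k.comp (j i) = of i)
    (hφ : ∀ i, Function.Injective (φ i)) (hAC : ∀ i k, φ i k ∈ A i ↔ k ∈ C) (i : ι) :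
    (⨆ i, (A i).map (j i)) ⊓ (j i).range = (A i).map (j i) := by
  apply Subgroup.map_injective hk
  simp only [Subgroup.map_inf _ _ _ hk, Subgroup.map_iSup, Subgroup.map_map, MonoidHom.map_range,
    hkj]
  exact iSup_map_of_inf_range_of hAC hφ i

section Pair

universe u

variable (G₁ G₂ : Type u)

def pairFamily : Bool → Type u
  | true => G₁
  | false => G₂

variable [Group G₁] [Group G₂]

instance : ∀ b, Group (pairFamily G₁ G₂ b)
  | true => ‹Group G₁›
  | false => ‹Group G₂›

variable {G₁ G₂} {G₀ : Type u} [Group G₀]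

def pairHom (f₁ : G₀ →* G₁) (f₂ : G₀ →* G₂) : ∀ b, G₀ →* pairFamily G₁ G₂ b
  | true => f₁
  | false => f₂

def pairLift {M : Type*} [Monoid M] (j₁ : G₁ →* M) (j₂ : G₂ →* M) :
    ∀ b, pairFamily G₁ G₂ b →* M
  | true => j₁
  | false => j₂

def pairSubgroup (A : Subgroup G₁) (B : Subgroup G₂) : ∀ b, Subgroup (pairFamily G₁ G₂ b)
  | true => A
  | false => B

theorem exists_injective_comp_eq_of {G₃ : Type u} [Group G₃] {f₁ : G₀ →* G₁} {f₂ : G₀ →* G₂}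
    {j₁ : G₁ →* G₃} {j₂ : G₂ →* G₃} (hcomm : j₁.comp f₁ = j₂.comp f₂)
    (huniv : ∀ (G' : Type u) [Group G'] (k₁ : G₁ →* G') (k₂ : G₂ →* G'),
      k₁.comp f₁ = k₂.comp f₂ → ∃! k : G₃ →* G', k.comp j₁ = k₁ ∧ k.comp j₂ = k₂) :
    ∃ k : G₃ →* PushoutI (pairHom f₁ f₂), Function.Injective k ∧
      ∀ b, k.comp (pairLift j₁ j₂ b) = of b := by
  have hof : (of (φ := pairHom f₁ f₂) true).comp f₁ = (of false).comp f₂ :=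
    (of_comp_eq_base true).trans (of_comp_eq_base false).symm
  obtain ⟨k, ⟨hk₁, hk₂⟩, -⟩ := huniv _ _ _ hof
  have hlift : ∀ b, (pairLift j₁ j₂ b).comp (pairHom f₁ f₂ b) = j₁.comp f₁ := by
    rintro (_ | _)
    exacts [hcomm.symm, rfl]
  have hlk : (lift (pairLift j₁ j₂) (j₁.comp f₁) hlift).comp k = MonoidHom.id G₃ := by
    refine (huniv G₃ j₁ j₂ hcomm).unique ⟨?_, ?_⟩ ⟨j₁.id_comp, j₂.id_comp⟩
    · rw [MonoidHom.comp_assoc, hk₁]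
      exact MonoidHom.ext (lift_of _ _ hlift (i := true))
    · rw [MonoidHom.comp_assoc, hk₂]
      exact MonoidHom.ext (lift_of _ _ hlift (i := false))
  refine ⟨k, Function.LeftInverse.injective (DFunLike.congr_fun hlk), ?_⟩
  rintro (_ | _)
  exacts [hk₂, hk₁]

end Pair

end Monoid.PushoutI

open Monoid.PushoutI in
/-- Subgroup compatibility of free amalgamation: in the pushout `G₃` of
`f₁ : G₀ →* G₁` and `f₂ : G₀ →* G₂`, if `A ≤ G₁` and `B ≤ G₂` satisfy
`A ∩ G₀ = B ∩ G₀ = C`, then the subgroup `H` of `G₃` generated by `A ∪ B`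
meets `G₁` exactly in `A` and `G₂` exactly in `B`. -/
theorem amalgam_generated_subgroup_intersection
    (G₀ G₁ G₂ G₃ : Type) [Group G₀] [Group G₁] [Group G₂] [Group G₃]
    (f₁ : G₀ →* G₁) (f₂ : G₀ →* G₂)
    (hf₁ : Function.Injective f₁) (hf₂ : Function.Injective f₂)
    (j₁ : G₁ →* G₃) (j₂ : G₂ →* G₃)
    (hcomm : j₁.comp f₁ = j₂.comp f₂)
    (huniv : ∀ (G' : Type) [Group G'] (k₁ : G₁ →* G') (k₂ : G₂ →* G'),
      k₁.comp f₁ = k₂.comp f₂ →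
      ∃! k : G₃ →* G', k.comp j₁ = k₁ ∧ k.comp j₂ = k₂)
    (A : Subgroup G₁) (B : Subgroup G₂) (C : Subgroup G₀)
    (hA : ∀ a : G₀, f₁ a ∈ A ↔ a ∈ C)
    (hB : ∀ a : G₀, f₂ a ∈ B ↔ a ∈ C)
    (H : Subgroup G₃)
    (hH : H = Subgroup.closure ((A.map j₁ : Subgroup G₃) ∪ (B.map j₂ : Subgroup G₃) : Set G₃)) :
    H ⊓ j₁.range = A.map j₁ ∧ H ⊓ j₂.range = B.map j₂ := by
  obtain ⟨k, hk, hkj⟩ := exists_injective_comp_eq_of hcomm huniv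
  have hφ : ∀ b, Function.Injective (pairHom f₁ f₂ b) := by
    rintro (_ | _)
    exacts [hf₂, hf₁]
  have hAC : ∀ b c, pairHom f₁ f₂ b c ∈ pairSubgroup A B b ↔ c ∈ C := by
    rintro (_ | _)
    exacts [hB, hA]
  have hH' : H = ⨆ b, (pairSubgroup A B b).map (pairLift j₁ j₂ b) := by
    rw [hH, iSup_bool_eq, Subgroup.closure_union, Subgroup.closure_eq, Subgroup.closure_eq]
    rfl
  subst hH'
  exact ⟨iSup_map_inf_range_eq_map_of_injective _ hk hkj hφ hAC true,
    iSup_map_inf_range_eq_map_of_injective _ hk hkj hφ hAC false⟩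
end

section
/- Let G be a group, A, B ≤ G subgroups, and φ : A → B an isomorphism. Then there is a group G₁ containing G and an element z ∈ G₁ such that z a z⁻¹ = φ(a) for all a ∈ A, and the inclusion G → G₁ is injective (HNN extension embedding). -/
/-- HNN embedding (Britton): given a group `G`, subgroups `A, B ≤ G` and an isomorphism
`φ : A ≃* B`, there is a group `G₁` containing `G` (via an injective homomorphism `j`)
and an element `z ∈ G₁` with `z a z⁻¹ = φ(a)` for all `a ∈ A`. -/
theorem hnn_extension_embedding (G : Type) [Group G] (A B : Subgroup G) (φ : A ≃* B) :
    ∃ (G₁ : Type) (_ : Group G₁) (j : G →* G₁) (z : G₁),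
      Function.Injective j ∧ ∀ a : A, z * j (a : G) * z⁻¹ = j ((φ a : B) : G) := by
  refine ⟨HNNExtension G A B φ, inferInstance, HNNExtension.of, HNNExtension.t,
    HNNExtension.of_injective φ, fun a => ?_⟩
  rw [HNNExtension.equiv_eq_conj]
end

section
/- Let G*_φ be an HNN extension of G along φ : A → B with stable letter z. If A = B = M₀ ≤ G and G₀ = ⟨M₀ ∪ {z}⟩ ≤ G*_φ, and φ is an automorphism of M₀, then G₀ is isomorphic to the HNN extension of M₀ along φ (i.e., the subgroup generated by M₀ and z is the 'free' extension of M₀ by z subject only to the relations z a z⁻¹ = φ(a), a ∈ M₀). -/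
/-!
A reduced word of `M₀ *_φ` stays reduced when its letters are read in `G`, because an element of
`M₀` lies in the associated subgroup `M₀` of `G *_φ`. So if such a word maps to `1`, Britton's
lemma in `G *_φ` shows that it contains no stable letter, and injectivity of `M₀ → G *_φ` shows
that its head is trivial. The range is generated by the images of the generators of `M₀ *_φ`.
-/

namespace HNNExtension

open NormalWord

variable {H G : Type*} [Group H] [Group G] {A' B' : Subgroup H} {A B : Subgroup G}
  {ψ : A' ≃* B'} {φ : A ≃* B}

theorem exists_reducedWord_prod_eq (x : HNNExtension G A B φ) :
    ∃ w : ReducedWord G A B, w.prod φ = x := by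
  obtain ⟨d⟩ := TransversalPair.nonempty G A B
  exact ⟨(NormalWord.equiv φ d x).toReducedWord, (NormalWord.equiv φ d).symm_apply_apply x⟩

theorem closure_range_of_union_t :
    Subgroup.closure (Set.range (of : G →* HNNExtension G A B φ) ∪ {t}) = ⊤ := by
  rw [eq_top_iff]
  rintro x -
  induction x using induction_on with
  | of g => exact Subgroup.subset_closure (Or.inl ⟨g, rfl⟩)
  | t => exact Subgroup.subset_closure (Or.inr rfl)
  | mul x y hx hy => exact mul_mem hx hy
  | inv x hx => exact inv_mem hx

namespace NormalWord.ReducedWord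

variable (f : H →* G) (hA : A.comap f ≤ A') (hB : B.comap f ≤ B')

def map (w : ReducedWord H A' B') : ReducedWord G A B where
  head := f w.head
  toList := w.toList.map (Prod.map id f)
  chain := by
    rw [List.isChain_map]
    refine w.chain.imp fun a b hab hfa => hab ?_
    rcases Int.units_eq_one_or a.1 with h | h <;> simp only [Prod.map_fst, Prod.map_snd, id,
      h, toSubgroup_one, toSubgroup_neg_one] at hfa ⊢
    exacts [hA hfa, hB hfa]

theorem toList_map (w : ReducedWord H A' B') :
    (w.map f hA hB).toList = w.toList.map (Prod.map id f) := rfl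

theorem prod_map (Φ : HNNExtension H A' B' ψ →* HNNExtension G A B φ)
    (hΦof : ∀ h, Φ (of h) = of (f h)) (hΦt : Φ t = t) (w : ReducedWord H A' B') :
    (w.map f hA hB).prod φ = Φ (w.prod ψ) := by
  simp only [ReducedWord.prod, map, map_mul, map_list_prod, List.map_map, Function.comp_def,
    map_zpow, hΦof, hΦt, Prod.map_fst, Prod.map_snd, id]

end NormalWord.ReducedWord

open NormalWord.ReducedWord in
theorem injective_of_comap_le (f : H →* G) (hf : Function.Injective f)
    (hA : A.comap f ≤ A') (hB : B.comap f ≤ B')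
    (Φ : HNNExtension H A' B' ψ →* HNNExtension G A B φ)
    (hΦof : ∀ h, Φ (of h) = of (f h)) (hΦt : Φ t = t) :
    Function.Injective Φ := by
  refine (injective_iff_map_eq_one Φ).2 fun x hx => ?_
  obtain ⟨w, rfl⟩ := exists_reducedWord_prod_eq x
  have hnil : w.toList = [] := by
    have hmem : (w.map f hA hB).prod φ ∈ (of.range : Subgroup (HNNExtension G A B φ)) := by
      rw [prod_map f hA hB Φ hΦof hΦt, hx]
      exact one_mem _
    simpa [toList_map] using ReducedWord.toList_eq_nil_of_mem_of_range φ _ hmem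
  have hprod : w.prod ψ = of w.head := by simp [ReducedWord.prod, hnil]
  have hhead : w.head = 1 := by
    refine hf (of_injective (φ := φ) ?_)
    rw [← hΦof, ← hprod, hx, map_one, map_one]
  rw [hprod, hhead, map_one]

theorem range_eq_closure (f : H →* G) (Φ : HNNExtension H A' B' ψ →* HNNExtension G A B φ)
    (hΦof : ∀ h, Φ (of h) = of (f h)) (hΦt : Φ t = t) :
    Φ.range = Subgroup.closure (of '' (f.range : Set G) ∪ {t}) := by
  have hcomp : Φ ∘ of = of ∘ f := funext hΦof
  rw [MonoidHom.range_eq_map, ← closure_range_of_union_t, MonoidHom.map_closure,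
    Set.image_union, Set.image_singleton, hΦt, ← Set.range_comp, hcomp, Set.range_comp,
    MonoidHom.coe_range]

end HNNExtension

open HNNExtension in
theorem hnn_subgroup_generated_is_hnn_general (G : Type) [Group G] (M₀ : Subgroup G)
    (φ : M₀ ≃* M₀)
    (ψ : (⊤ : Subgroup ↥M₀) ≃* (⊤ : Subgroup ↥M₀))
    (Φ : HNNExtension ↥M₀ ⊤ ⊤ ψ →* HNNExtension G M₀ M₀ φ)
    (hΦof : ∀ m : M₀, Φ (of (m : ↥M₀)) = of (m : G))
    (hΦt : Φ t = t) :
    Function.Injective Φ ∧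
      Φ.range =
        Subgroup.closure ((⇑(of : G →* HNNExtension G M₀ M₀ φ) '' (M₀ : Set G)) ∪
          {(t : HNNExtension G M₀ M₀ φ)}) := by
  refine ⟨injective_of_comap_le M₀.subtype M₀.subtype_injective le_top le_top Φ hΦof hΦt, ?_⟩
  rw [range_eq_closure M₀.subtype Φ hΦof hΦt, Subgroup.range_subtype]

open HNNExtension in
/-- In the HNN extension `G*_φ` of `G` along an automorphism `φ` of `M₀ ≤ G` with stable
letter `t`, the subgroup generated by `M₀ ∪ {t}` is (canonically isomorphic to) the HNN
extension of `M₀` along `φ`: the canonical homomorphism from `M₀*_φ` is injective with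
range the subgroup generated by `M₀ ∪ {t}`. -/
theorem hnn_subgroup_generated_is_hnn (G : Type) [Group G] (M₀ : Subgroup G)
    (φ : M₀ ≃* M₀)
    (ψ : (⊤ : Subgroup ↥M₀) ≃* (⊤ : Subgroup ↥M₀))
    (hψ : ψ = Subgroup.topEquiv.trans (φ.trans Subgroup.topEquiv.symm))
    (Φ : HNNExtension ↥M₀ ⊤ ⊤ ψ →* HNNExtension G M₀ M₀ φ)
    (hΦof : ∀ m : M₀, Φ (of (m : ↥M₀)) = of (m : G))
    (hΦt : Φ t = t) :
    Function.Injective Φ ∧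
      Φ.range =
        Subgroup.closure ((⇑(of : G →* HNNExtension G M₀ M₀ φ) '' (M₀ : Set G)) ∪
          {(t : HNNExtension G M₀ M₀ φ)}) :=
  hnn_subgroup_generated_is_hnn_general G M₀ φ ψ Φ hΦof hΦt
end
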